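/- For every constant C > 0 there exist constants m and M with 0 < m ≤ M such that every ρ > 0 satisfying |Ψ(ρ)| ≤ C obeys m ≤ ρ ≤ M. -/

import Mathlib

/-- The relative pressure potential `G(ρ) = ρ ∫_{ρ̄}^{ρ} s⁻²(p(s) - p̄) ds`
    with `p(s) = a s^γ`. -/
noncomputable def Gfun (a γ ρb ρ : ℝ) : ℝ :=
  ρ * ∫ s in ρb..ρ, (a * s ^ γ - a * ρb ^ γ) / s ^ 2

/-- Kanel''s function `Ψ(ρ) = ∫_{ρ̄}^{ρ} √(G(s)) / s^{3/2} ds`. -/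
noncomputable def PsiFun (a γ ρb ρ : ℝ) : ℝ :=
  ∫ s in ρb..ρ, Real.sqrt (Gfun a γ ρb s) / s ^ ((3 : ℝ) / 2)

/-! Since `p` is strictly increasing, `G(s) / s = ∫_{ρ̄}^s (p(t) - p̄) / t² dt` vanishes only at `ρ̄`
and grows as `s` moves away from `ρ̄`, so `G(s) ≥ k s` for some `k > 0` whenever `s ≤ ρ̄ / 2` or
`s ≥ 2ρ̄`. There the integrand of `Ψ` is at least `√k / s`, hence
`Ψ(ρ) ≥ √k log (ρ / 2ρ̄) → ∞` as `ρ → ∞` and `Ψ(ρ) ≤ -√k log (ρ̄ / 2ρ) → -∞` as `ρ → 0⁺`. -/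

open MeasureTheory intervalIntegral Set Filter Topology Real

lemma intervalIntegrable_of_continuousOn_Ioi {f : ℝ → ℝ} {t c d : ℝ}
    (hf : ContinuousOn f (Ioi t)) (hc : t < c) (hd : t < d) :
    IntervalIntegrable f volume c d :=
  (hf.mono fun _ hx => (lt_min hc hd).trans_le hx.1).intervalIntegrable

lemma mul_log_le_integral_of_inv_le {f : ℝ → ℝ} {a b c d κ : ℝ} (hc : 0 < c) (hac : a ≤ c)
    (hcd : c ≤ d) (hdb : d ≤ b) (hf : IntervalIntegrable f volume a b)
    (hf_nonneg : ∀ s ∈ Icc a b, 0 ≤ f s) (hf_ge : ∀ s ∈ Icc c d, κ * s⁻¹ ≤ f s) :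
    κ * log (d / c) ≤ ∫ s in a..b, f s := by
  have hinv : ContinuousOn (fun s : ℝ => κ * s⁻¹) (Ioi 0) :=
    continuousOn_const.mul (continuousOn_inv₀.mono fun _ hs => ne_of_gt hs)
  calc κ * log (d / c) = ∫ s in c..d, κ * s⁻¹ := by
        rw [intervalIntegral.integral_const_mul, integral_inv_of_pos hc (hc.trans_le hcd)]
    _ ≤ ∫ s in c..d, f s :=
        integral_mono_on hcd (intervalIntegrable_of_continuousOn_Ioi hinv hc (hc.trans_le hcd))
          (hf.mono_set (uIcc_subset_uIcc (mem_uIcc_of_le hac (hcd.trans hdb))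
            (mem_uIcc_of_le (hac.trans hcd) hdb))) hf_ge
    _ ≤ ∫ s in a..b, f s := integral_mono_interval hac hcd hdb
        ((ae_restrict_iff' measurableSet_Ioc).2 <| .of_forall fun s hs =>
          hf_nonneg s (Ioc_subset_Icc_self hs)) hf

lemma exists_bounds_of_abs_le_of_tendsto {f : ℝ → ℝ} (h_zero : Tendsto f (𝓝[>] 0) atBot)
    (h_top : Tendsto f atTop atTop) (C : ℝ) :
    ∃ m M : ℝ, 0 < m ∧ m ≤ M ∧ ∀ ρ : ℝ, 0 < ρ → |f ρ| ≤ C → m ≤ ρ ∧ ρ ≤ M := by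
  obtain ⟨M, hM⟩ := eventually_atTop.1 (h_top.eventually_gt_atTop C)
  obtain ⟨m, hm, hm_lt⟩ := mem_nhdsGT_iff_exists_Ioc_subset.1 (h_zero.eventually_lt_atBot (-C))
  refine ⟨m, max M m, hm, le_max_right _ _, fun ρ hρ hfρ => ⟨?_, ?_⟩⟩
  · by_contra! h
    have hlt : f ρ < -C := hm_lt ⟨hρ, h.le⟩
    linarith [(abs_le.1 hfρ).1]
  · by_contra! h
    linarith [(abs_le.1 hfρ).2, hM ρ ((le_max_left _ _).trans h.le)]

/-- For a general pressure law `p`, `relPotential p ρb` and `kanelPsi p ρb` are `G` and `Ψ`;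
`Gfun a γ ρb` and `PsiFun a γ ρb` are the case `p s = a * s ^ γ`. -/
noncomputable def relPotential (p : ℝ → ℝ) (ρb ρ : ℝ) : ℝ :=
  ρ * ∫ s in ρb..ρ, (p s - p ρb) / s ^ 2

noncomputable def kanelPsi (p : ℝ → ℝ) (ρb ρ : ℝ) : ℝ :=
  ∫ s in ρb..ρ, √(relPotential p ρb s) / s ^ ((3 : ℝ) / 2)

section PressureLaw

variable {p : ℝ → ℝ} {ρb : ℝ}

lemma continuousOn_pressure_sub_div_sq (hp : ContinuousOn p (Ioi 0)) :
    ContinuousOn (fun s => (p s - p ρb) / s ^ 2) (Ioi 0) :=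
  (hp.sub continuousOn_const).div (continuousOn_pow 2) fun _ hs => pow_ne_zero 2 (ne_of_gt hs)

lemma continuousOn_relPotential (hp : ContinuousOn p (Ioi 0)) (hρb : 0 < ρb) :
    ContinuousOn (relPotential p ρb) (Ioi 0) := by
  intro ρ hρ
  have hg := continuousOn_pressure_sub_div_sq (ρb := ρb) hp
  have hderiv := integral_hasDerivAt_right (intervalIntegrable_of_continuousOn_Ioi hg hρb hρ)
    (hg.stronglyMeasurableAtFilter isOpen_Ioi ρ hρ) (hg.continuousAt (Ioi_mem_nhds hρ))
  exact (continuousAt_id.mul hderiv.continuousAt).continuousWithinAt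

lemma intervalIntegrable_kanelPsi_integrand (hp : ContinuousOn p (Ioi 0)) (hρb : 0 < ρb)
    {c d : ℝ} (hc : 0 < c) (hd : 0 < d) :
    IntervalIntegrable (fun s => √(relPotential p ρb s) / s ^ ((3 : ℝ) / 2)) volume c d := by
  refine intervalIntegrable_of_continuousOn_Ioi ?_ hc hd
  refine (continuous_sqrt.comp_continuousOn (continuousOn_relPotential hp hρb)).div
    (fun s hs => (continuousAt_rpow_const s _ (Or.inl (ne_of_gt hs))).continuousWithinAt)
    fun s hs => (rpow_pos_of_pos hs _).ne'

lemma exists_pos_mul_le_relPotential_of_two_mul_le (hp : ContinuousOn p (Ioi 0))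
    (hp_mono : StrictMonoOn p (Ioi 0)) (hρb : 0 < ρb) :
    ∃ k > 0, ∀ s, 2 * ρb ≤ s → k * s ≤ relPotential p ρb s := by
  have hg := continuousOn_pressure_sub_div_sq (ρb := ρb) hp
  have h2 : 0 < 2 * ρb := by linarith
  refine ⟨∫ t in ρb..2 * ρb, (p t - p ρb) / t ^ 2, intervalIntegral_pos_of_pos_on
    (intervalIntegrable_of_continuousOn_Ioi hg hρb h2) (fun t ht => ?_) (by linarith),
    fun s hs => ?_⟩
  · have ht0 : 0 < t := hρb.trans ht.1
    exact div_pos (sub_pos.2 (hp_mono hρb ht0 ht.1)) (by positivity)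
  · have hs0 : 0 < s := h2.trans_le hs
    rw [relPotential, mul_comm]
    refine mul_le_mul_of_nonneg_left (integral_mono_interval le_rfl (by linarith) hs ?_
      (intervalIntegrable_of_continuousOn_Ioi hg hρb hs0)) hs0.le
    refine (ae_restrict_iff' measurableSet_Ioc).2 (.of_forall fun t ht => ?_)
    exact div_nonneg (sub_nonneg.2 (hp_mono.monotoneOn hρb (hρb.trans ht.1) ht.1.le))
      (by positivity)

lemma exists_pos_mul_le_relPotential_of_le_half (hp : ContinuousOn p (Ioi 0))
    (hp_mono : StrictMonoOn p (Ioi 0)) (hρb : 0 < ρb) :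
    ∃ k > 0, ∀ s, 0 < s → s ≤ ρb / 2 → k * s ≤ relPotential p ρb s := by
  have hg := (continuousOn_pressure_sub_div_sq (ρb := ρb) hp).neg
  refine ⟨∫ t in ρb / 2..ρb, -((p t - p ρb) / t ^ 2), intervalIntegral_pos_of_pos_on
    (intervalIntegrable_of_continuousOn_Ioi hg (by linarith) hρb) (fun t ht => ?_) (by linarith),
    fun s hs0 hs => ?_⟩
  · have ht0 : 0 < t := by linarith [ht.1]
    exact neg_pos.2 (div_neg_of_neg_of_pos (sub_neg.2 (hp_mono ht0 hρb ht.2)) (by positivity))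
  · rw [relPotential, integral_symm s ρb, ← intervalIntegral.integral_neg, mul_comm]
    refine mul_le_mul_of_nonneg_left (integral_mono_interval hs (by linarith) le_rfl ?_
      (intervalIntegrable_of_continuousOn_Ioi hg hs0 hρb)) hs0.le
    refine (ae_restrict_iff' measurableSet_Ioc).2 (.of_forall fun t ht => ?_)
    exact neg_nonneg.2 (div_nonpos_of_nonpos_of_nonneg
      (sub_nonpos.2 (hp_mono.monotoneOn (hs0.trans ht.1) hρb ht.2)) (by positivity))

lemma sqrt_mul_inv_le_sqrt_div_rpow_three_halves {k G s : ℝ} (hs : 0 < s) (hk : 0 ≤ k)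
    (h : k * s ≤ G) : √k * s⁻¹ ≤ √G / s ^ ((3 : ℝ) / 2) := by
  have h32 : s ^ ((3 : ℝ) / 2) = s * √s := by
    rw [show (3 : ℝ) / 2 = 1 + 1 / 2 by norm_num, rpow_add hs, rpow_one, sqrt_eq_rpow]
  calc √k * s⁻¹ = √(k * s) / s ^ ((3 : ℝ) / 2) := by
        rw [h32, sqrt_mul hk]
        field_simp
    _ ≤ √G / s ^ ((3 : ℝ) / 2) := by gcongr

lemma tendsto_kanelPsi_atTop (hp : ContinuousOn p (Ioi 0)) (hp_mono : StrictMonoOn p (Ioi 0))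
    (hρb : 0 < ρb) : Tendsto (kanelPsi p ρb) atTop atTop := by
  obtain ⟨k, hk, hkG⟩ := exists_pos_mul_le_relPotential_of_two_mul_le hp hp_mono hρb
  have h2 : 0 < 2 * ρb := by linarith
  refine tendsto_atTop_mono' _ ?_ ((tendsto_log_atTop.comp
    (tendsto_id.atTop_div_const h2)).const_mul_atTop (sqrt_pos.2 hk))
  filter_upwards [eventually_ge_atTop (2 * ρb)] with ρ hρ
  exact mul_log_le_integral_of_inv_le h2 (by linarith) hρ le_rfl
    (intervalIntegrable_kanelPsi_integrand hp hρb hρb (h2.trans_le hρ))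
    (fun s hs => div_nonneg (sqrt_nonneg _) (rpow_nonneg (hρb.le.trans hs.1) _))
    (fun s hs => sqrt_mul_inv_le_sqrt_div_rpow_three_halves (h2.trans_le hs.1) hk.le
      (hkG s hs.1))

lemma tendsto_kanelPsi_nhdsGT_zero (hp : ContinuousOn p (Ioi 0))
    (hp_mono : StrictMonoOn p (Ioi 0)) (hρb : 0 < ρb) :
    Tendsto (kanelPsi p ρb) (𝓝[>] 0) atBot := by
  obtain ⟨k, hk, hkG⟩ := exists_pos_mul_le_relPotential_of_le_half hp hp_mono hρb
  have h2 : 0 < ρb / 2 := by linarith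
  have hlog : Tendsto (fun ρ => √k * log (ρb / 2 / ρ)) (𝓝[>] 0) atTop := by
    refine (tendsto_log_atTop.comp ?_).const_mul_atTop (sqrt_pos.2 hk)
    exact (tendsto_inv_nhdsGT_zero.const_mul_atTop h2).congr fun ρ => (div_eq_mul_inv _ _).symm
  rw [← tendsto_neg_atTop_iff]
  refine tendsto_atTop_mono' _ ?_ hlog
  filter_upwards [Ioc_mem_nhdsGT h2] with ρ hρ
  rw [kanelPsi, integral_symm, neg_neg]
  exact mul_log_le_integral_of_inv_le hρ.1 le_rfl hρ.2 (by linarith)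
    (intervalIntegrable_kanelPsi_integrand hp hρb hρ.1 hρb)
    (fun s hs => div_nonneg (sqrt_nonneg _) (rpow_nonneg (hρ.1.le.trans hs.1) _))
    (fun s hs => sqrt_mul_inv_le_sqrt_div_rpow_three_halves (hρ.1.trans_le hs.1) hk.le
      (hkG s (hρ.1.trans_le hs.1) hs.2))

end PressureLaw

theorem PsiFun_bound_implies_density_bounds (a γ ρb : ℝ)
    (ha : 0 < a) (hγ : 1 ≤ γ) (hρb : 0 < ρb) :
    ∀ C : ℝ, 0 < C → ∃ m M : ℝ, 0 < m ∧ m ≤ M ∧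
      ∀ ρ : ℝ, 0 < ρ → |PsiFun a γ ρb ρ| ≤ C → m ≤ ρ ∧ ρ ≤ M := by
  intro C _
  have hγ0 : 0 < γ := zero_lt_one.trans_le hγ
  have hp : ContinuousOn (fun s : ℝ => a * s ^ γ) (Ioi 0) :=
    (continuous_const.mul (continuous_id.rpow_const fun _ => Or.inr hγ0.le)).continuousOn
  have hp_mono : StrictMonoOn (fun s : ℝ => a * s ^ γ) (Ioi 0) := fun x hx _ _ hxy =>
    mul_lt_mul_of_pos_left (rpow_lt_rpow (le_of_lt hx) hxy hγ0) ha
  exact exists_bounds_of_abs_le_of_tendsto (tendsto_kanelPsi_nhdsGT_zero hp hp_mono hρb)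
    (tendsto_kanelPsi_atTop hp hp_mono hρb) C
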